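/- arXiv:1507.08267 — 16 statements merged into one kernel-verified Lean document; each statement's English description precedes it below -/
import Mathlib

section
/- Let A be a unital ring and a ∈ A regular. If a ≤⁻ b, then there exists a generalized inverse a⁺ of a (a a⁺ a = a and a⁺ a a⁺ = a⁺) with a⁺ a = a⁺ b and a a⁺ = b a⁺. -/
/-- Set of inner inverses ({1}-inverses) of `a`. -/
def G1 {A : Type*} [Ring A] (a : A) : Set A := {x | a * x * a = a}

/-- The difference set of inner inverses. -/
def D1 {A : Type*} [Ring A] (a : A) : Set A := {z | ∃ x ∈ G1 a, ∃ y ∈ G1 a, z = x - y}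

/-- The minus partial order. -/
def minusLE {A : Type*} [Ring A] (a b : A) : Prop :=
  ∃ p q : A, IsIdempotentElem p ∧ IsIdempotentElem q ∧
    (∀ z, z * a = 0 ↔ z * p = 0) ∧ (∀ z, a * z = 0 ↔ q * z = 0) ∧
    p * a = p * b ∧ a * q = b * q

/-- The space pre-order. -/
def spaceLE {A : Type*} [Ring A] (a b : A) : Prop :=
  (∃ x, a = b * x) ∧ (∃ y, a = y * b)

/-- Semiprime ring: `xAx = 0` implies `x = 0`. -/
def IsSemiprimeRing (A : Type*) [Ring A] : Prop := ∀ x : A, (∀ y, x * y * x = 0) → x = 0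

theorem stmt2 {A : Type*} [Ring A] (a b : A) (hreg : ∃ x, a * x * a = a)
    (h : minusLE a b) :
    ∃ ap : A, a * ap * a = a ∧ ap * a * ap = ap ∧ ap * a = ap * b ∧ a * ap = b * ap := by
  obtain ⟨x, hx⟩ := hreg
  obtain ⟨p, q, hp, hq, hl, hr, hpab, hqab⟩ := h
  have h1 : p * a = a := by
    have := (hl (1 - p)).mpr (by rw [sub_mul, one_mul, hp, sub_self])
    rw [sub_mul, one_mul, sub_eq_zero] at this
    exact this.symm
  have h2 : a * q = a := by
    have := (hr (1 - q)).mpr (by rw [mul_sub, mul_one, hq, sub_self])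
    rw [mul_sub, mul_one, sub_eq_zero] at this
    exact this.symm
  have h3 : a * x * p = p := by
    have := (hl (1 - a * x)).mp (by rw [sub_mul, one_mul, hx, sub_self])
    rw [sub_mul, one_mul, sub_eq_zero] at this
    exact this.symm
  have h4 : q * x * a = q := by
    have := (hr (1 - x * a)).mp (by rw [mul_sub, mul_one, ← mul_assoc, hx, sub_self])
    rw [mul_sub, mul_one, sub_eq_zero] at this
    rw [mul_assoc]
    exact this.symm
  have hL : q * x * p * a = q := by rw [mul_assoc (q * x) p a, h1, h4]
  have hR : q * x * p * b = q := by rw [mul_assoc (q * x) p b, ← hpab, ← mul_assoc, hL]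
  have hL' : a * (q * x * p) = p := by
    rw [← mul_assoc a (q * x) p, ← mul_assoc a q x, h2, h3]
  have hR' : b * (q * x * p) = p := by
    rw [← mul_assoc b (q * x) p, ← mul_assoc b q x, ← hqab, h2, h3]
  refine ⟨q * x * p, ?_, ?_, ?_, ?_⟩
  · rw [hL', h1]
  · rw [hL, ← mul_assoc q (q * x) p, ← mul_assoc q q x, hq]
  · rw [hL, hR]
  · rw [hL', hR']
end

section
/- Let A be a unital ring, a ∈ A regular, and b ∈ A. If there exists an inner inverse a⁻ of a with a⁻ a = a⁻ b and a a⁻ = b a⁻, then a ≤⁻ b. -/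
theorem stmt3 {A : Type*} [Ring A] (a b c : A) (hc : a * c * a = a)
    (h1 : c * a = c * b) (h2 : a * c = b * c) : minusLE a b := by
  refine ⟨a * c, c * a, ?_, ?_, ?_, ?_, ?_, ?_⟩
  · show a * c * (a * c) = a * c
    rw [← mul_assoc, hc]
  · show c * a * (c * a) = c * a
    rw [mul_assoc c, ← mul_assoc a, hc]
  · intro z
    constructor
    · intro h; rw [← mul_assoc, h, zero_mul]
    · intro h
      have : z * (a * c * a) = 0 := by rw [← mul_assoc, h, zero_mul]
      rwa [hc] at this
  · intro z
    constructor
    · intro h; rw [mul_assoc, h, mul_zero]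
    · intro h
      have : a * c * a * z = 0 := by
        rw [mul_assoc, mul_assoc, ← mul_assoc c a z, h, mul_zero]
      rwa [hc] at this
  · rw [mul_assoc, h1, ← mul_assoc]
  · rw [← mul_assoc, ← mul_assoc, ← h2]
end

section
/- Let A be a unital ring and b ∈ A regular. If a ∈ A satisfies a ≤⁻ b, then a is regular and every inner inverse of b is an inner inverse of a. -/
theorem stmt4 {A : Type*} [Ring A] (a b : A) (hb : ∃ y, b * y * b = b)
    (h : minusLE a b) : (∃ x, a * x * a = a) ∧ G1 b ⊆ G1 a := by
  obtain ⟨p, q, hp, hq, hl, hr, hpa, haq⟩ := h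
  have ha1 : (1 - p) * a = 0 := (hl (1 - p)).2 (by
    simp [sub_mul, hp.eq])
  have ha2 : a * (1 - q) = 0 := (hr (1 - q)).2 (by
    simp [mul_sub, hq.eq])
  have hpaa : p * a = a := by
    have := ha1; rw [sub_mul, one_mul, sub_eq_zero] at this; exact this.symm
  have haqa : a * q = a := by
    have := ha2; rw [mul_sub, mul_one, sub_eq_zero] at this; exact this.symm
  have hapb : a = p * b := by rw [← hpaa, hpa]
  have habq : a = b * q := by rw [← haqa, haq]
  have key : ∀ x, b * x * b = b → a * x * a = a := by
    intro x hx
    calc a * x * a = (p * b) * x * (b * q) := by rw [← hapb, ← habq]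
      _ = p * (b * x * b) * q := by noncomm_ring
      _ = a := by rw [hx, ← hapb, haqa]
  obtain ⟨y, hy⟩ := hb
  exact ⟨⟨y, key y hy⟩, fun x hx => key x hx⟩
end

section
/- Let A be a unital ring and u ∈ A invertible. Then for all a, b ∈ A: a ≤⁻ b if and only if u a ≤⁻ u b, and a ≤⁻ b if and only if a u ≤⁻ b u. -/
lemma minusLE_mul_left_aux {A : Type*} [Ring A] {u v : A} (huv : u * v = 1)
    (hvu : v * u = 1) {a b : A} (h : minusLE a b) : minusLE (u * a) (u * b) := by
  obtain ⟨p, q, hp, hq, hl, hr, hpb, haq⟩ := h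
  refine ⟨u * p * v, q, ?_, hq, ?_, ?_, ?_, ?_⟩
  · show (u * p * v) * (u * p * v) = u * p * v
    calc (u * p * v) * (u * p * v) = u * (p * (v * u) * p) * v := by noncomm_ring
      _ = u * (p * p) * v := by rw [hvu]; noncomm_ring
      _ = u * p * v := by rw [hp]
  · intro z
    rw [show z * (u * a) = (z * u) * a by noncomm_ring, hl]
    constructor
    · intro hz
      rw [show z * (u * p * v) = (z * u * p) * v by noncomm_ring, hz, zero_mul]
    · intro hz
      have : z * (u * p * v) * u = 0 := by rw [hz, zero_mul]
      calc z * u * p = z * (u * p * v) * u := by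
            rw [show z * (u * p * v) * u = z * u * p * (v * u) by noncomm_ring, hvu, mul_one]
        _ = 0 := this
  · intro z
    rw [← hr]
    constructor
    · intro hz
      have : v * (u * a * z) = 0 := by rw [hz, mul_zero]
      calc a * z = v * u * (a * z) := by rw [hvu, one_mul]
        _ = v * (u * a * z) := by noncomm_ring
        _ = 0 := this
    · intro hz
      rw [show u * a * z = u * (a * z) by noncomm_ring, hz, mul_zero]
  · calc u * p * v * (u * a) = u * (p * (v * u) * a) := by noncomm_ring
      _ = u * (p * a) := by rw [hvu]; noncomm_ring
      _ = u * (p * b) := by rw [hpb]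
      _ = u * p * v * (u * b) := by
          rw [show u * p * v * (u * b) = u * (p * (v * u) * b) by noncomm_ring, hvu]; noncomm_ring
  · rw [show u * a * q = u * (a * q) by noncomm_ring, haq]; noncomm_ring

lemma minusLE_mul_right_aux {A : Type*} [Ring A] {u v : A} (huv : u * v = 1)
    (hvu : v * u = 1) {a b : A} (h : minusLE a b) : minusLE (a * u) (b * u) := by
  obtain ⟨p, q, hp, hq, hl, hr, hpb, haq⟩ := h
  refine ⟨p, v * q * u, hp, ?_, ?_, ?_, ?_, ?_⟩
  · show (v * q * u) * (v * q * u) = v * q * u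
    calc (v * q * u) * (v * q * u) = v * (q * (u * v) * q) * u := by noncomm_ring
      _ = v * (q * q) * u := by rw [huv]; noncomm_ring
      _ = v * q * u := by rw [hq]
  · intro z
    rw [← hl]
    constructor
    · intro hz
      have : (z * (a * u)) * v = 0 := by rw [hz, zero_mul]
      calc z * a = z * a * (u * v) := by rw [huv, mul_one]
        _ = (z * (a * u)) * v := by noncomm_ring
        _ = 0 := this
    · intro hz
      rw [show z * (a * u) = (z * a) * u by noncomm_ring, hz, zero_mul]
  · intro z
    rw [show a * u * z = a * (u * z) by noncomm_ring, hr]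
    constructor
    · intro hz
      rw [show v * q * u * z = v * (q * (u * z)) by noncomm_ring, hz, mul_zero]
    · intro hz
      have : u * (v * q * u * z) = 0 := by rw [hz, mul_zero]
      calc q * (u * z) = (u * v) * q * (u * z) := by rw [huv, one_mul]
        _ = u * (v * q * u * z) := by noncomm_ring
        _ = 0 := this
  · rw [show p * (a * u) = (p * a) * u by noncomm_ring, hpb]; noncomm_ring
  · calc a * u * (v * q * u) = a * (u * v) * q * u := by noncomm_ring
      _ = (a * q) * u := by rw [huv]; noncomm_ring
      _ = (b * q) * u := by rw [haq]
      _ = b * u * (v * q * u) := by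
          rw [show b * u * (v * q * u) = b * (u * v) * q * u by noncomm_ring, huv]; noncomm_ring

theorem stmt5 {A : Type*} [Ring A] (u : A) (hu : IsUnit u) (a b : A) :
    (minusLE a b ↔ minusLE (u * a) (u * b)) ∧
    (minusLE a b ↔ minusLE (a * u) (b * u)) := by
  obtain ⟨w, rfl⟩ := hu
  have huv : (w : A) * (↑w⁻¹ : A) = 1 := w.mul_inv
  have hvu : (↑w⁻¹ : A) * (w : A) = 1 := w.inv_mul
  constructor
  · constructor
    · exact minusLE_mul_left_aux huv hvu
    · intro h
      have := minusLE_mul_left_aux hvu huv h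
      rwa [← mul_assoc, hvu, one_mul, ← mul_assoc, hvu, one_mul] at this
  · constructor
    · exact minusLE_mul_right_aux huv hvu
    · intro h
      have := minusLE_mul_right_aux hvu huv h
      rwa [mul_assoc, huv, mul_one, mul_assoc, huv, mul_one] at this
end

section
/- Let A be a unital ring, p ∈ A an idempotent, and a ∈ A with a ≤⁻ p. Then a is idempotent and a = ap = pa. -/
theorem stmt6 {A : Type*} [Ring A] (p a : A) (hp : IsIdempotentElem p)
    (h : minusLE a p) : IsIdempotentElem a ∧ a = a * p ∧ a = p * a := by
  obtain ⟨p', q', hp', hq', hl, hr, hpa, haq⟩ := h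
  have h1 : (1 - p') * a = 0 := by
    rw [hl]; simp [sub_mul, hp'.eq]
  have h2 : a * (1 - q') = 0 := by
    rw [hr]; simp [mul_sub, hq'.eq]
  have ha1 : p' * a = a := by
    have := h1; rw [sub_mul, one_mul, sub_eq_zero] at this; exact this.symm
  have ha2 : a * q' = a := by
    have := h2; rw [mul_sub, mul_one, sub_eq_zero] at this; exact this.symm
  have e1 : a = p' * p := by rw [← ha1, hpa]
  have e2 : a = p * q' := by rw [← ha2, haq]
  have hap : a * p = a := by rw [e1, mul_assoc, hp.eq]
  have hpa' : p * a = a := by rw [e2, ← mul_assoc, hp.eq]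
  refine ⟨?_, hap.symm, hpa'.symm⟩
  show a * a = a
  calc a * a = a * (p * q') := by rw [← e2]
    _ = (a * p) * q' := by rw [mul_assoc]
    _ = a := by rw [hap, ha2]
end

section
/- Let A be a unital semiprime ring and a, b ∈ A both regular. Then a ≤⁻ b if and only if every inner inverse of b is an inner inverse of a. -/
theorem stmt7 {A : Type*} [Ring A] (hA : IsSemiprimeRing A) (a b : A)
    (ha : ∃ x, a * x * a = a) (hb : ∃ y, b * y * b = b) :
    minusLE a b ↔ G1 b ⊆ G1 a := by
  obtain ⟨a', ha'⟩ := ha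
  obtain ⟨b', hb'⟩ := hb
  constructor
  · rintro ⟨p, q, hp, hq, hlp, hrq, hpab, haqb⟩ x hx
    have hx : b * x * b = b := hx
    -- a = p * a
    have h1 : (1 - p) * p = 0 := by
      rw [sub_mul, one_mul, hp.eq, sub_self]
    have h2 : (1 - p) * a = 0 := (hlp _).mpr h1
    have hpa : p * a = a := by
      have := h2
      rw [sub_mul, one_mul, sub_eq_zero] at this
      exact this.symm
    -- a = a * q
    have h3 : q * (1 - q) = 0 := by
      rw [mul_sub, mul_one, hq.eq, sub_self]
    have h4 : a * (1 - q) = 0 := (hrq _).mpr h3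
    have haq : a * q = a := by
      have := h4
      rw [mul_sub, mul_one, sub_eq_zero] at this
      exact this.symm
    show a * x * a = a
    calc a * x * a = (p * a) * x * (a * q) := by rw [hpa, haq]
      _ = (p * b) * x * (b * q) := by rw [hpab, haqb]
      _ = p * (b * x * b) * q := by noncomm_ring
      _ = p * b * q := by rw [hx]
      _ = (p * a) * q := by rw [hpab]
      _ = a := by rw [hpa, haq]
  · intro hG
    have hab'a : a * b' * a = a := hG hb'
    -- key identity
    have key : ∀ u : A, a * u * a = a * b' * b * u * (b * b' * a) := by
      intro u
      have hmem : (b' + u - b' * b * u * (b * b')) ∈ G1 b := by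
        show b * (b' + u - b' * b * u * (b * b')) * b = b
        have e1 : b * (b' * b * u * (b * b')) * b = b * b' * b * u * (b * b' * b) := by
          noncomm_ring
        have e2 : b * (b' + u - b' * b * u * (b * b')) * b
            = b * b' * b + b * u * b - b * (b' * b * u * (b * b')) * b := by
          noncomm_ring
        rw [e2, e1, hb']
        abel
      have := hG hmem
      have e3 : a * (b' + u - b' * b * u * (b * b')) * a
          = a * b' * a + a * u * a - a * b' * b * u * (b * b' * a) := by
        noncomm_ring
      rw [G1, Set.mem_setOf_eq, e3, hab'a, add_sub_assoc, add_eq_left,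
        sub_eq_zero] at this
      exact this
    -- from key: a*t*a = a*b'*b*t*a and a*t*a = a*t*(b*b'*a)
    have star : ∀ t : A, a * t * a = a * b' * b * t * a := by
      intro t
      have h := key (t - b' * (b * t))
      have hz : a * b' * b * (t - b' * (b * t)) * (b * b' * a) = 0 := by
        have : b * (t - b' * (b * t)) = 0 := by
          rw [mul_sub, sub_eq_zero]
          calc b * t = b * b' * b * t := by rw [hb']
            _ = b * (b' * (b * t)) := by noncomm_ring
        calc a * b' * b * (t - b' * (b * t)) * (b * b' * a)
            = a * b' * (b * (t - b' * (b * t))) * (b * b' * a) := by noncomm_ring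
          _ = a * b' * 0 * (b * b' * a) := by rw [this]
          _ = 0 := by noncomm_ring
      rw [hz] at h
      have e : a * (t - b' * (b * t)) * a = a * t * a - a * b' * b * t * a := by
        noncomm_ring
      rw [e, sub_eq_zero] at h
      exact h
    have star2 : ∀ t : A, a * t * a = a * t * (b * b' * a) := by
      intro t
      have h := key (t - t * b * b')
      have hz : a * b' * b * (t - t * b * b') * (b * b' * a) = 0 := by
        have : (t - t * b * b') * b = 0 := by
          rw [sub_mul, sub_eq_zero]
          calc t * b = t * (b * b' * b) := by rw [hb']
            _ = t * b * b' * b := by noncomm_ring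
        calc a * b' * b * (t - t * b * b') * (b * b' * a)
            = a * b' * (b * (((t - t * b * b') * b) * (b' * a))) := by noncomm_ring
          _ = a * b' * (b * (0 * (b' * a))) := by rw [this]
          _ = 0 := by noncomm_ring
      rw [hz] at h
      have e : a * (t - t * b * b') * a = a * t * a - a * t * (b * b' * a) := by
        noncomm_ring
      rw [e, sub_eq_zero] at h
      exact h
    -- a = a * b' * b
    have hr : a = a * b' * b := by
      have : a - a * b' * b = 0 := by
        apply hA
        intro t
        have e : (a - a * b' * b) * t * (a - a * b' * b)
            = a * t * a - (a * t * a) * (b' * b) - (a * b' * b * t * a)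
              + (a * b' * b * t * a) * (b' * b) := by
          noncomm_ring
        rw [e, ← star t]
        abel
      rw [sub_eq_zero] at this
      exact this
    -- a = b * b' * a
    have hs : a = b * b' * a := by
      have : a - b * b' * a = 0 := by
        apply hA
        intro t
        have e : (a - b * b' * a) * t * (a - b * b' * a)
            = a * t * a - a * t * (b * b' * a) - (b * b') * (a * t * a)
              + (b * b') * (a * t * (b * b' * a)) := by
          noncomm_ring
        rw [e, ← star2 t]
        abel
      rw [sub_eq_zero] at this
      exact this
    refine ⟨a * b', b' * a, ?_, ?_, ?_, ?_, ?_, ?_⟩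
    · show a * b' * (a * b') = a * b'
      calc a * b' * (a * b') = (a * b' * a) * b' := by noncomm_ring
        _ = a * b' := by rw [hab'a]
    · show b' * a * (b' * a) = b' * a
      calc b' * a * (b' * a) = b' * (a * b' * a) := by noncomm_ring
        _ = b' * a := by rw [hab'a]
    · intro z
      constructor
      · intro h
        calc z * (a * b') = (z * a) * b' := by noncomm_ring
          _ = 0 := by rw [h, zero_mul]
      · intro h
        calc z * a = z * (a * b' * a) := by rw [hab'a]
          _ = (z * (a * b')) * a := by noncomm_ring
          _ = 0 := by rw [h, zero_mul]
    · intro z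
      constructor
      · intro h
        calc b' * a * z = b' * (a * z) := by noncomm_ring
          _ = 0 := by rw [h, mul_zero]
      · intro h
        calc a * z = (a * b' * a) * z := by rw [hab'a]
          _ = a * (b' * a * z) := by noncomm_ring
          _ = 0 := by rw [h, mul_zero]
    · calc a * b' * a = a := hab'a
        _ = a * b' * b := hr
    · calc a * (b' * a) = a * b' * a := by noncomm_ring
        _ = a := hab'a
        _ = b * b' * a := hs
        _ = b * (b' * a) := by noncomm_ring
end

section
/- Let A be a unital semiprime ring and a, b ∈ A regular. Then a ≤⁻ b if and only if G₁(a) ∩ G₁(b) ≠ ∅ and D₁(b) ⊆ D₁(a). -/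
theorem stmt8 {A : Type*} [Ring A] (hA : IsSemiprimeRing A) (a b : A)
    (ha : ∃ x, a * x * a = a) (hb : ∃ y, b * y * b = b) :
    minusLE a b ↔ (G1 a ∩ G1 b).Nonempty ∧ D1 b ⊆ D1 a := by
  constructor
  · rintro ⟨p, q, hp, hq, hl, hr, hpab, haq⟩
    have hpa : p * a = a := by
      have h1 : (1 - p) * p = 0 := by rw [sub_mul, one_mul, hp.eq, sub_self]
      have h2 : (1 - p) * a = 0 := (hl (1 - p)).2 h1
      rw [sub_mul, one_mul, sub_eq_zero] at h2
      exact h2.symm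
    have haq' : a * q = a := by
      have h1 : q * (1 - q) = 0 := by rw [mul_sub, mul_one, hq.eq, sub_self]
      have h2 : a * (1 - q) = 0 := (hr (1 - q)).2 h1
      rw [mul_sub, mul_one, sub_eq_zero] at h2
      exact h2.symm
    have hab : p * b = a := by rw [← hpab, hpa]
    have hbq : b * q = a := by rw [← haq, haq']
    have hGsub : ∀ y, b * y * b = b → a * y * a = a := by
      intro y hy
      calc a * y * a = p * b * y * (b * q) := by rw [hab, hbq]
        _ = p * (b * y * b) * q := by noncomm_ring
        _ = a := by rw [hy, hab, haq']
    obtain ⟨y0, hy0⟩ := hb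
    refine ⟨⟨y0, hGsub y0 hy0, hy0⟩, ?_⟩
    rintro z ⟨u, hu, v, hv, rfl⟩
    exact ⟨u, hGsub u hu, v, hGsub v hv, rfl⟩
  · rintro ⟨⟨x, hxa, hxb⟩, hD⟩
    have hxa : a * x * a = a := hxa
    have hxb : b * x * b = b := hxb
    -- every inner inverse of b is an inner inverse of a
    have key : ∀ y, b * y * b = b → a * y * a = a := by
      intro y hy
      obtain ⟨u, hu, v, hv, huv⟩ := hD ⟨y, hy, x, hxb, rfl⟩
      have hu : a * u * a = a := hu
      have hv : a * v * a = a := hv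
      have h0 : a * (y - x) * a = 0 := by
        rw [huv]
        have e : a * (u - v) * a = a * u * a - a * v * a := by noncomm_ring
        rw [e, hu, hv, sub_self]
      have e2 : a * (y - x) * a = a * y * a - a * x * a := by noncomm_ring
      rw [e2, hxa, sub_eq_zero] at h0
      exact h0
    have S1 : ∀ t, (a - a * x * b) * t * (a - b * x * a) = 0 := by
      intro t
      have e : b * (x + (1 - x * b) * t * (1 - b * x)) * b
          = b * x * b + (b - b * x * b) * t * (b - b * x * b) := by noncomm_ring
      have hy : b * (x + (1 - x * b) * t * (1 - b * x)) * b = b := by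
        rw [e, hxb, sub_self, zero_mul, zero_mul, add_zero]
      have h := key _ hy
      have e2 : a * (x + (1 - x * b) * t * (1 - b * x)) * a
          = a * x * a + (a - a * x * b) * t * (a - b * x * a) := by noncomm_ring
      rw [e2, hxa, add_eq_left] at h
      exact h
    have S2 : ∀ t, a * x * b * t * (a - b * x * a) = 0 := by
      intro t
      have e : b * (x + x * b * t * (1 - b * x)) * b
          = b * x * b + b * x * b * t * (b - b * x * b) := by noncomm_ring
      have hy : b * (x + x * b * t * (1 - b * x)) * b = b := by
        rw [e, hxb, sub_self, mul_zero, add_zero]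
      have h := key _ hy
      have e2 : a * (x + x * b * t * (1 - b * x)) * a
          = a * x * a + a * x * b * t * (a - b * x * a) := by noncomm_ring
      rw [e2, hxa, add_eq_left] at h
      exact h
    have S3 : ∀ t, (a - a * x * b) * t * (b * x * a) = 0 := by
      intro t
      have e : b * (x + (1 - x * b) * t * (b * x)) * b
          = b * x * b + (b - b * x * b) * t * (b * x * b) := by noncomm_ring
      have hy : b * (x + (1 - x * b) * t * (b * x)) * b = b := by
        rw [e, hxb, sub_self, zero_mul, zero_mul, add_zero]
      have h := key _ hy
      have e2 : a * (x + (1 - x * b) * t * (b * x)) * a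
          = a * x * a + (a - a * x * b) * t * (b * x * a) := by noncomm_ring
      rw [e2, hxa, add_eq_left] at h
      exact h
    have h4 : ∀ t, a * t * (a - b * x * a) = 0 := by
      intro t
      have e : a * t * (a - b * x * a)
          = (a - a * x * b) * t * (a - b * x * a) + a * x * b * t * (a - b * x * a) := by
        noncomm_ring
      rw [e, S1 t, S2 t, add_zero]
    have hu : b * x * a = a := by
      have h0 : a - b * x * a = 0 := by
        apply hA
        intro t
        have e : (a - b * x * a) * t * (a - b * x * a)
            = a * t * (a - b * x * a) - b * x * (a * t * (a - b * x * a)) := by noncomm_ring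
        rw [e, h4 t, mul_zero, sub_zero]
      rw [sub_eq_zero] at h0
      exact h0.symm
    have h5 : ∀ t, (a - a * x * b) * t * a = 0 := by
      intro t
      have e : (a - a * x * b) * t * a
          = (a - a * x * b) * t * (a - b * x * a) + (a - a * x * b) * t * (b * x * a) := by
        noncomm_ring
      rw [e, S1 t, S3 t, add_zero]
    have hv : a * x * b = a := by
      have h0 : a - a * x * b = 0 := by
        apply hA
        intro t
        have e : (a - a * x * b) * t * (a - a * x * b)
            = (a - a * x * b) * t * a - (a - a * x * b) * t * a * (x * b) := by noncomm_ring
        rw [e, h5 t, zero_mul, sub_zero]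
      rw [sub_eq_zero] at h0
      exact h0.symm
    refine ⟨a * x, x * a, ?_, ?_, ?_, ?_, ?_, ?_⟩
    · show a * x * (a * x) = a * x
      rw [← mul_assoc, hxa]
    · show x * a * (x * a) = x * a
      have e : x * a * (x * a) = x * (a * x * a) := by noncomm_ring
      rw [e, hxa]
    · intro z
      constructor
      · intro h
        rw [← mul_assoc, h, zero_mul]
      · intro h
        have : z * (a * x) * a = 0 := by rw [h, zero_mul]
        rwa [mul_assoc, mul_assoc, ← mul_assoc a x a, hxa] at this
    · intro z
      constructor
      · intro h
        rw [mul_assoc, h, mul_zero]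
      · intro h
        have : a * (x * a * z) = 0 := by rw [h, mul_zero]
        rwa [← mul_assoc, ← mul_assoc, hxa] at this
    · rw [mul_assoc, mul_assoc]
      rw [← mul_assoc a x a, hxa, ← mul_assoc a x b, hv]
    · rw [← mul_assoc, ← mul_assoc, hxa, hu]
end

section
/- Let A be a unital semiprime ring. Then the relation ≤⁻ is a partial order (reflexive, transitive, antisymmetric) on the set of regular elements of A. -/
private lemma leftAbsorb {A : Type*} [Ring A] {a p : A} (hp : IsIdempotentElem p)
    (h : ∀ z, z * a = 0 ↔ z * p = 0) : p * a = a := by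
  have h1 : (1 - p) * p = 0 := by rw [sub_mul, one_mul, hp.eq, sub_self]
  have h2 := (h (1 - p)).mpr h1
  rw [sub_mul, one_mul, sub_eq_zero] at h2
  exact h2.symm

private lemma rightAbsorb {A : Type*} [Ring A] {a q : A} (hq : IsIdempotentElem q)
    (h : ∀ z, a * z = 0 ↔ q * z = 0) : a * q = a := by
  have h1 : q * (1 - q) = 0 := by rw [mul_sub, mul_one, hq.eq, sub_self]
  have h2 := (h (1 - q)).mpr h1
  rw [mul_sub, mul_one, sub_eq_zero] at h2
  exact h2.symm

theorem stmt9 {A : Type*} [Ring A] (hA : IsSemiprimeRing A) :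
    (∀ a : A, (∃ x, a * x * a = a) → minusLE a a) ∧
    (∀ a b c : A, (∃ x, a * x * a = a) → (∃ y, b * y * b = b) → (∃ z, c * z * c = c) →
      minusLE a b → minusLE b c → minusLE a c) ∧
    (∀ a b : A, (∃ x, a * x * a = a) → (∃ y, b * y * b = b) →
      minusLE a b → minusLE b a → a = b) := by
  refine ⟨?_, ?_, ?_⟩
  · -- Reflexivity
    rintro a ⟨x, hx⟩
    refine ⟨a * x, x * a, ?_, ?_, ?_, ?_, rfl, rfl⟩
    · show a * x * (a * x) = a * x
      rw [← mul_assoc, hx]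
    · show x * a * (x * a) = x * a
      rw [mul_assoc, ← mul_assoc a x a, hx]
    · intro z
      constructor
      · intro h0; rw [← mul_assoc, h0, zero_mul]
      · intro h0
        have : z * a = z * (a * x) * a := by rw [mul_assoc, hx]
        rw [this, h0, zero_mul]
    · intro z
      constructor
      · intro h0; rw [mul_assoc, h0, mul_zero]
      · intro h0
        have : a * z = a * (x * a * z) := by
          rw [← mul_assoc, ← mul_assoc, hx]
        rw [this, h0, mul_zero]
  · -- Transitivity
    rintro a b c ⟨x, hx⟩ _ _ ⟨p, q, hp, hq, hal, har, hpab, haqbq⟩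
      ⟨p', q', hp', hq', hbl, hbr, hp'bc, hbq'cq'⟩
    have hpa : p * a = a := leftAbsorb hp hal
    have haq : a * q = a := rightAbsorb hq har
    have hp'b : p' * b = b := leftAbsorb hp' hbl
    have hbq' : b * q' = b := rightAbsorb hq' hbr
    have habq : a = b * q := by rw [← haqbq, haq]
    have hapb : a = p * b := by rw [← hpab, hpa]
    have hp'c : p' * c = b := by rw [← hp'bc, hp'b]
    have hcq' : c * q' = b := by rw [← hbq'cq', hbq']
    have hp'a : p' * a = a := by
      conv_lhs => rw [habq, ← mul_assoc, hp'b]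
      exact habq.symm
    have haq'' : a * q' = a := by
      conv_lhs => rw [hapb, mul_assoc, hbq']
      exact hapb.symm
    have hPa : a * (x * (p * p')) * a = a := by
      have h : a * (x * (p * p')) * a = a * x * (p * (p' * a)) := by noncomm_ring
      rw [h, hp'a, hpa, hx]
    have hPc : a * (x * (p * p')) * c = a := by
      have h : a * (x * (p * p')) * c = a * x * (p * (p' * c)) := by noncomm_ring
      rw [h, hp'c, ← hpab, hpa, hx]
    have haQ : a * (q' * (q * x) * a) = a := by
      have h : a * (q' * (q * x) * a) = a * q' * q * (x * a) := by noncomm_ring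
      rw [h, haq'', haq, ← mul_assoc, hx]
    have hcQ : c * (q' * (q * x) * a) = a := by
      have h : c * (q' * (q * x) * a) = c * q' * q * (x * a) := by noncomm_ring
      rw [h, hcq', ← haqbq, haq, ← mul_assoc, hx]
    refine ⟨a * (x * (p * p')), q' * (q * x) * a, ?_, ?_, ?_, ?_, ?_, ?_⟩
    · show a * (x * (p * p')) * (a * (x * (p * p'))) = a * (x * (p * p'))
      have h : a * (x * (p * p')) * (a * (x * (p * p'))) =
          a * (x * (p * p')) * a * (x * (p * p')) := by noncomm_ring
      rw [h, hPa]
    · show q' * (q * x) * a * (q' * (q * x) * a) = q' * (q * x) * a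
      have h : q' * (q * x) * a * (q' * (q * x) * a) =
          q' * (q * x) * (a * (q' * (q * x) * a)) := by noncomm_ring
      rw [h, haQ]
    · intro z
      constructor
      · intro h0; rw [← mul_assoc, h0, zero_mul]
      · intro h0
        have : z * a = z * (a * (x * (p * p'))) * a := by
          rw [mul_assoc, hPa]
        rw [this, h0, zero_mul]
    · intro z
      constructor
      · intro h0
        have h : q' * (q * x) * a * z = q' * (q * x) * (a * z) := by noncomm_ring
        rw [h, h0, mul_zero]
      · intro h0
        have : a * z = a * (q' * (q * x) * a * z) := by
          rw [← mul_assoc, haQ]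
        rw [this, h0, mul_zero]
    · rw [hPa, hPc]
    · rw [haQ, hcQ]
  · -- Antisymmetry
    rintro a b _ _ ⟨p, q, hp, hq, hal, har, hpab, haqbq⟩
      ⟨p', q', hp', hq', hbl, hbr, hp'ba, hbq'aq'⟩
    have haq : a * q = a := rightAbsorb hq har
    have hp'b : p' * b = b := leftAbsorb hp' hbl
    have habq : a = b * q := by rw [← haqbq, haq]
    have hbp'a : b = p' * a := by rw [← hp'ba, hp'b]
    have hbq : b * q = b := by rw [hbp'a, mul_assoc, haq]
    rw [habq, hbq]
end

section
/- Let A be a unital semiprime ring, a ∈ A, and b ∈ A regular. The following are equivalent: (1) a = bx = yb for some x, y ∈ A (space pre-order a ≤_s b); (2) ann_l(b) ⊆ ann_l(a) and ann_r(b) ⊆ ann_r(a); (3) a = b b⁻ a = a b⁻ b for every inner inverse b⁻ of b; (4) a D₁(b) a = {0}. -/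
theorem stmt10 {A : Type*} [Ring A] (hA : IsSemiprimeRing A) (a b : A)
    (hb : ∃ y, b * y * b = b) :
    (spaceLE a b ↔ (∀ z, z * b = 0 → z * a = 0) ∧ (∀ z, b * z = 0 → a * z = 0)) ∧
    (spaceLE a b ↔ ∀ c ∈ G1 b, a = b * c * a ∧ a = a * c * b) ∧
    (spaceLE a b ↔ ∀ d ∈ D1 b, a * d * a = 0) := by
  obtain ⟨y0, hy0⟩ := hb
  -- (1) → (2)
  have h12 : spaceLE a b → (∀ z, z * b = 0 → z * a = 0) ∧ (∀ z, b * z = 0 → a * z = 0) := by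
    rintro ⟨⟨x, hx⟩, ⟨y, hy⟩⟩
    constructor
    · intro z hz
      rw [hx, ← mul_assoc, hz, zero_mul]
    · intro z hz
      rw [hy, mul_assoc, hz, mul_zero]
  -- (2) → (3)
  have h23 : ((∀ z, z * b = 0 → z * a = 0) ∧ (∀ z, b * z = 0 → a * z = 0)) →
      ∀ c ∈ G1 b, a = b * c * a ∧ a = a * c * b := by
    rintro ⟨hl, hr⟩ c hc
    have hc' : b * c * b = b := hc
    constructor
    · have h1 : (b * c - 1) * b = 0 := by rw [sub_mul, one_mul, hc', sub_self]
      have h2 := hl _ h1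
      rw [sub_mul, one_mul, sub_eq_zero] at h2
      exact h2.symm
    · have h1 : b * (c * b - 1) = 0 := by
        rw [mul_sub, mul_one, ← mul_assoc, hc', sub_self]
      have h2 := hr _ h1
      rw [mul_sub, mul_one, sub_eq_zero] at h2
      rw [mul_assoc]; exact h2.symm
  -- (3) → (1)
  have h31 : (∀ c ∈ G1 b, a = b * c * a ∧ a = a * c * b) → spaceLE a b := by
    intro h
    obtain ⟨h1, h2⟩ := h y0 hy0
    exact ⟨⟨y0 * a, by rw [← mul_assoc]; exact h1⟩, ⟨a * y0, h2⟩⟩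
  -- (1) → (4)
  have h14 : spaceLE a b → ∀ d ∈ D1 b, a * d * a = 0 := by
    rintro ⟨⟨x, hx⟩, ⟨y, hy⟩⟩ d ⟨u, hu, v, hv, hd⟩
    have key : ∀ w, b * w * b = b → a * w * a = y * b * x := by
      intro w hw
      calc a * w * a = (y * b) * w * (b * x) := by rw [← hy, ← hx]
        _ = y * (b * w * b) * x := by noncomm_ring
        _ = y * b * x := by rw [hw]
    rw [hd, mul_sub, sub_mul, key u hu, key v hv, sub_self]
  -- (4) → (1)
  have h41 : (∀ d ∈ D1 b, a * d * a = 0) → spaceLE a b := by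
    intro h
    have hby : b * (1 - y0 * b) = 0 := by
      rw [mul_sub, mul_one, ← mul_assoc, hy0, sub_self]
    have hyb : (1 - b * y0) * b = 0 := by
      rw [sub_mul, one_mul, hy0, sub_self]
    -- right part: a = (a*y0)*b
    have h1 : ∀ s : A, a * ((1 - y0 * b) * s) * a = 0 := by
      intro s
      have hmem : y0 + (1 - y0 * b) * s ∈ G1 b := by
        show b * (y0 + (1 - y0 * b) * s) * b = b
        have e : b * (y0 + (1 - y0 * b) * s) * b
            = b * y0 * b + (b * (1 - y0 * b)) * (s * b) := by noncomm_ring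
        rw [e, hby, zero_mul, add_zero, hy0]
      have := h _ ⟨_, hmem, y0, hy0, rfl⟩
      simpa using this
    have hx0 : a * (1 - y0 * b) = 0 := by
      apply hA
      intro s
      have e : a * (1 - y0 * b) * s * (a * (1 - y0 * b))
          = (a * ((1 - y0 * b) * s) * a) * (1 - y0 * b) := by noncomm_ring
      rw [e, h1 s, zero_mul]
    have hr : a = a * y0 * b := by
      have := hx0
      rw [mul_sub, mul_one, sub_eq_zero] at this
      rw [← mul_assoc] at this
      exact this
    -- left part: a = b*(y0*a)
    have h2 : ∀ t : A, a * (t * (1 - b * y0)) * a = 0 := by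
      intro t
      have hmem : y0 + t * (1 - b * y0) ∈ G1 b := by
        show b * (y0 + t * (1 - b * y0)) * b = b
        have e : b * (y0 + t * (1 - b * y0)) * b
            = b * y0 * b + (b * t) * ((1 - b * y0) * b) := by noncomm_ring
        rw [e, hyb, mul_zero, add_zero, hy0]
      have := h _ ⟨_, hmem, y0, hy0, rfl⟩
      simpa using this
    have hw0 : (1 - b * y0) * a = 0 := by
      apply hA
      intro t
      have e : (1 - b * y0) * a * t * ((1 - b * y0) * a)
          = (1 - b * y0) * (a * (t * (1 - b * y0)) * a) := by noncomm_ring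
      rw [e, h2 t, mul_zero]
    have hl : a = b * (y0 * a) := by
      rw [sub_mul, one_mul, sub_eq_zero] at hw0
      rw [← mul_assoc]
      exact hw0
    exact ⟨⟨y0 * a, hl⟩, ⟨a * y0, hr⟩⟩
  refine ⟨⟨h12, fun h2p => h31 (h23 h2p)⟩,
    ⟨fun h1p => h23 (h12 h1p), h31⟩, ⟨h14, h41⟩⟩
end

section
/- Let A be a unital semiprime ring and a, b ∈ A regular. Then a ≤_s b if and only if D₁(b) ⊆ D₁(a). -/
theorem stmt11 {A : Type*} [Ring A] (hA : IsSemiprimeRing A) (a b : A)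
    (ha : ∃ x, a * x * a = a) (hb : ∃ y, b * y * b = b) :
    spaceLE a b ↔ D1 b ⊆ D1 a := by
  obtain ⟨a', ha'⟩ := ha
  obtain ⟨b', hb'⟩ := hb
  constructor
  · rintro ⟨⟨x, hx⟩, ⟨y, hy⟩⟩ z ⟨u, hu, v, hv, rfl⟩
    have hu' : b * u * b = b := hu
    have hv' : b * v * b = b := hv
    have hb0 : b * (u - v) * b = 0 := by
      have e : b * (u - v) * b = b * u * b - b * v * b := by noncomm_ring
      rw [e, hu', hv', sub_self]
    have h0 : a * (u - v) * a = 0 := by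
      have e : a * (u - v) * a = y * (b * (u - v) * b) * x := by
        nth_rewrite 2 [hx]; nth_rewrite 1 [hy]; noncomm_ring
      rw [e, hb0, mul_zero, zero_mul]
    refine ⟨a' + (u - v), ?_, a', ha', by abel⟩
    show a * (a' + (u - v)) * a = a
    have e : a * (a' + (u - v)) * a = a * a' * a + a * (u - v) * a := by noncomm_ring
    rw [e, ha', h0, add_zero]
  · intro h
    have key : ∀ z, b * z * b = 0 → a * z * a = 0 := by
      intro z hz
      have hmem : b' + z ∈ G1 b := by
        show b * (b' + z) * b = b
        have e : b * (b' + z) * b = b * b' * b + b * z * b := by noncomm_ring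
        rw [e, hb', hz, add_zero]
      have hzD : z ∈ D1 b := ⟨b' + z, hmem, b', hb', by abel⟩
      obtain ⟨s, hs, t, ht, hst⟩ := h hzD
      have hs' : a * s * a = a := hs
      have ht' : a * t * a = a := ht
      have e : a * z * a = a * s * a - a * t * a := by
        rw [hst]; noncomm_ring
      rw [e, hs', ht', sub_self]
    constructor
    · refine ⟨b' * a, ?_⟩
      have hd : (1 - b * b') * a = 0 := by
        apply hA
        intro w
        have h1 : a * (w * (1 - b * b')) * a = 0 := by
          apply key
          have e : b * (w * (1 - b * b')) * b = b * w * (b - b * b' * b) := by noncomm_ring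
          rw [e, hb', sub_self, mul_zero]
        calc (1 - b * b') * a * w * ((1 - b * b') * a)
            = (1 - b * b') * (a * (w * (1 - b * b')) * a) := by noncomm_ring
          _ = 0 := by rw [h1, mul_zero]
      have e : a - b * (b' * a) = (1 - b * b') * a := by noncomm_ring
      exact sub_eq_zero.mp (e.trans hd)
    · refine ⟨a * b', ?_⟩
      have hc : a * (1 - b' * b) = 0 := by
        apply hA
        intro w
        have h1 : a * ((1 - b' * b) * w) * a = 0 := by
          apply key
          have e : b * ((1 - b' * b) * w) * b = (b - b * b' * b) * w * b := by noncomm_ring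
          rw [e, hb', sub_self, zero_mul, zero_mul]
        calc a * (1 - b' * b) * w * (a * (1 - b' * b))
            = (a * ((1 - b' * b) * w) * a) * (1 - b' * b) := by noncomm_ring
          _ = 0 := by rw [h1, zero_mul]
      have e : a - a * b' * b = a * (1 - b' * b) := by noncomm_ring
      exact sub_eq_zero.mp (e.trans hc)
end

section
/- Let A be a unital semiprime ring and a, b ∈ A regular. Then a ≤⁻ b if and only if a ≤_s b and a and b have a common inner inverse. -/
theorem stmt12 {A : Type*} [Ring A] (hA : IsSemiprimeRing A) (a b : A)
    (ha : ∃ x, a * x * a = a) (hb : ∃ y, b * y * b = b) :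
    minusLE a b ↔ spaceLE a b ∧ (G1 a ∩ G1 b).Nonempty := by
  constructor
  · rintro ⟨p, q, hp, hq, hlp, hrq, hpab, haqb⟩
    -- a = p * a
    have h1 : (1 - p) * p = 0 := by
      rw [sub_mul, one_mul, hp.eq, sub_self]
    have hpa : p * a = a := by
      have := (hlp (1 - p)).mpr h1
      have : a - p * a = 0 := by rw [← this]; noncomm_ring
      linear_combination (norm := noncomm_ring) -this
    -- a = a * q
    have h2 : q * (1 - q) = 0 := by
      rw [mul_sub, mul_one, hq.eq, sub_self]
    have haq : a * q = a := by
      have := (hrq (1 - q)).mpr h2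
      have : a - a * q = 0 := by rw [← this]; noncomm_ring
      linear_combination (norm := noncomm_ring) -this
    have hpb : p * b = a := by rw [← hpab, hpa]
    have hbq : b * q = a := by rw [← haqb, haq]
    obtain ⟨y, hy⟩ := hb
    have hayb : a * y * b = a := by
      calc a * y * b = p * (b * y * b) := by rw [← hpb]; noncomm_ring
        _ = p * b := by rw [hy]
        _ = a := hpb
    have haya : a * y * a = a := by
      have h3 : a * y * a = a * y * (b * q) := by rw [hbq]
      rw [h3, show a * y * (b * q) = (a * y * b) * q by noncomm_ring, hayb, haq]
    refine ⟨⟨⟨q, hbq.symm⟩, ⟨p, hpb.symm⟩⟩, y, ?_, ?_⟩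
    · exact haya
    · exact hy
  · rintro ⟨⟨⟨x, hx⟩, ⟨w, hw⟩⟩, x₀, hx₀a, hx₀b⟩
    have hx₀a : a * x₀ * a = a := hx₀a
    have hx₀b : b * x₀ * b = b := hx₀b
    refine ⟨a * x₀, x₀ * a, ?_, ?_, ?_, ?_, ?_, ?_⟩
    · show a * x₀ * (a * x₀) = a * x₀
      calc a * x₀ * (a * x₀) = (a * x₀ * a) * x₀ := by noncomm_ring
        _ = a * x₀ := by rw [hx₀a]
    · show x₀ * a * (x₀ * a) = x₀ * a
      calc x₀ * a * (x₀ * a) = x₀ * (a * x₀ * a) := by noncomm_ring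
        _ = x₀ * a := by rw [hx₀a]
    · intro z
      constructor
      · intro h
        calc z * (a * x₀) = (z * a) * x₀ := by noncomm_ring
          _ = 0 := by rw [h]; simp
      · intro h
        calc z * a = z * (a * x₀) * a := by rw [show z * (a * x₀) * a = z * (a * x₀ * a) by noncomm_ring, hx₀a]
          _ = 0 := by rw [h]; simp
    · intro z
      constructor
      · intro h
        calc x₀ * a * z = x₀ * (a * z) := by noncomm_ring
          _ = 0 := by rw [h]; simp
      · intro h
        calc a * z = a * (x₀ * a * z) := by rw [show a * (x₀ * a * z) = (a * x₀ * a) * z by noncomm_ring, hx₀a]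
          _ = 0 := by rw [h]; simp
    · -- a * x₀ * a = a * x₀ * b
      calc a * x₀ * a = a := hx₀a
        _ = w * b := hw
        _ = w * (b * x₀ * b) := by rw [hx₀b]
        _ = a * x₀ * b := by rw [show w * (b * x₀ * b) = (w * b) * x₀ * b by noncomm_ring, ← hw]
    · -- a * (x₀ * a) = b * (x₀ * a)
      calc a * (x₀ * a) = a * x₀ * a := by noncomm_ring
        _ = a := hx₀a
        _ = b * x := hx
        _ = (b * x₀ * b) * x := by rw [hx₀b]
        _ = b * (x₀ * a) := by rw [show (b * x₀ * b) * x = b * (x₀ * (b * x)) by noncomm_ring, ← hx]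
end

section
/- Let A be a ring and a, b ∈ A regular with a ≤⁻ b (equivalently, a = a b⁻ b = b b⁻ a = a b⁻ a for every inner inverse b⁻ of b). Then b - a is regular; in fact (b-a) b⁻ (b-a) = b - a for every inner inverse b⁻ of b. -/
theorem stmt13 {A : Type*} [Ring A] (a b : A)
    (ha : ∃ x, a * x * a = a) (hb : ∃ y, b * y * b = b)
    (h : minusLE a b) :
    ∀ c ∈ G1 b, (b - a) * c * (b - a) = b - a := by
  intro c hc
  obtain ⟨p, q, hp, hq, hl, hr, hpab, haq⟩ := h
  have hbcb : b * c * b = b := hc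
  -- a = p * a
  have h1 : (1 - p) * a = 0 := (hl (1 - p)).mpr (by simp [sub_mul, hp.eq])
  have hpa : p * a = a := by
    have := h1; rw [sub_mul, one_mul, sub_eq_zero] at this; exact this.symm
  have h2 : a * (1 - q) = 0 := (hr (1 - q)).mpr (by simp [mul_sub, hq.eq])
  have haq' : a * q = a := by
    have := h2; rw [mul_sub, mul_one, sub_eq_zero] at this; exact this.symm
  -- a = p*b and a = b*q
  have hpb : p * b = a := by rw [← hpab, hpa]
  have hbq : b * q = a := by rw [← haq, haq']
  have hacb : a * c * b = a := by rw [← hpb, mul_assoc p b c, mul_assoc, hbcb]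
  have hbca : b * c * a = a := by
    conv_lhs => rw [← hbq]
    rw [show b * c * (b * q) = b * c * b * q by noncomm_ring, hbcb, hbq]
  have haca : a * c * a = a := by
    nth_rewrite 1 [← hpb]
    rw [show p * b * c * a = p * (b * c * a) by noncomm_ring, hbca, hpa]
  calc (b - a) * c * (b - a)
      = b * c * b - b * c * a - (a * c * b - a * c * a) := by noncomm_ring
    _ = b - a := by rw [hbcb, hbca, hacb, haca]; noncomm_ring
end

section
/- Let A be a ring and a, b ∈ A regular with a ≤⁻ b. Then G₁ᵇ(a) = {b⁻ - b⁻(b - a)b⁻ : b⁻ ∈ G₁(b)}, where G₁ᵇ(a) = {a⁻ ∈ G₁(a) : a a⁻ = b a⁻ and a⁻ a = a⁻ b}. -/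
private lemma aux_sub {A : Type*} [Ring A] (z s y t d : A)
    (h1 : z * d = 0) (h2 : d * z = 0) (h3 : d * s = d) (h4 : t * d = d)
    (h5 : y * d * y = y) :
    (z + s * y * t) - (z + s * y * t) * d * (z + s * y * t) = z := by
  have e1 : (z + s * y * t) * d = s * (y * d) := by
    rw [add_mul, h1, zero_add, mul_assoc (s * y) t d, h4, mul_assoc]
  have ez : s * (y * d) * z = 0 := by
    rw [mul_assoc, mul_assoc, h2, mul_zero, mul_zero]
  have es : s * (y * d) * (s * y * t) = s * y * t :=
    calc s * (y * d) * (s * y * t) = s * (y * (d * s) * (y * t)) := by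
          simp only [mul_assoc]
      _ = s * (y * d * (y * t)) := by rw [h3]
      _ = s * (y * d * y * t) := by simp only [mul_assoc]
      _ = s * (y * t) := by rw [h5]
      _ = s * y * t := (mul_assoc s y t).symm
  have e2 : (z + s * y * t) * d * (z + s * y * t) = s * y * t := by
    rw [e1, mul_add, ez, zero_add, es]
  rw [e2, add_sub_cancel_right]

private lemma aux_inv {A : Type*} [Ring A] (z s y t d a b : A)
    (hzb : b * z * b = a) (hbs : b * s = d) (htb : t * b = d)
    (hdyd : d * y * d = d) (had : a + d = b) :
    b * (z + s * y * t) * b = b :=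
  calc b * (z + s * y * t) * b = b * z * b + b * s * (y * (t * b)) := by
        simp only [mul_add, add_mul, mul_assoc]
    _ = a + b * s * (y * d) := by rw [hzb, htb]
    _ = a + d * y * d := by rw [hbs]; simp only [mul_assoc]
    _ = a + d := by rw [hdyd]
    _ = b := had

theorem stmt14 {A : Type*} [Ring A] (a b : A)
    (ha : ∃ x, a * x * a = a) (hb : ∃ y, b * y * b = b)
    (h : minusLE a b) :
    {x : A | x ∈ G1 a ∧ a * x = b * x ∧ x * a = x * b} =
      {z : A | ∃ c ∈ G1 b, z = c - c * (b - a) * c} := by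
  obtain ⟨p, q, hp, hq, hpa, haq, hpb, hbq⟩ := h
  have hpa1 : p * a = a := by
    have h1 : (1 - p) * p = 0 := by rw [sub_mul, one_mul, hp, sub_self]
    have h2 : (1 - p) * a = 0 := (hpa _).mpr h1
    rw [sub_mul, one_mul, sub_eq_zero] at h2
    exact h2.symm
  have haq1 : a * q = a := by
    have h1 : q * (1 - q) = 0 := by rw [mul_sub, mul_one, hq, sub_self]
    have h2 : a * (1 - q) = 0 := (haq _).mpr h1
    rw [mul_sub, mul_one, sub_eq_zero] at h2
    exact h2.symm
  have hpb1 : p * b = a := by rw [← hpb, hpa1]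
  have hbq1 : b * q = a := by rw [← hbq, haq1]
  ext z
  simp only [Set.mem_setOf_eq, G1]
  constructor
  · rintro ⟨hx1, hx2, hx3⟩
    have hbxb : b * z * b = a := by
      rw [← hx2, mul_assoc, ← hx3, ← mul_assoc, hx1]
    obtain ⟨y₀, hy₀⟩ := hb
    have h1 : b * y₀ * a = a :=
      calc b * y₀ * a = b * y₀ * (b * q) := by rw [hbq1]
        _ = b * y₀ * b * q := by simp only [mul_assoc]
        _ = b * q := by rw [hy₀]
        _ = a := hbq1
    have h2 : a * y₀ * b = a :=
      calc a * y₀ * b = p * b * y₀ * b := by rw [hpb1]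
        _ = p * (b * y₀ * b) := by simp only [mul_assoc]
        _ = p * b := by rw [hy₀]
        _ = a := hpb1
    have h3 : a * y₀ * a = a :=
      calc a * y₀ * a = a * y₀ * (b * q) := by rw [hbq1]
        _ = a * y₀ * b * q := by simp only [mul_assoc]
        _ = a * q := by rw [h2]
        _ = a := haq1
    have hdyd0 : (b - a) * y₀ * (b - a) = b - a := by
      simp only [sub_mul, mul_sub]
      rw [hy₀, h1, h2, h3]
      abel
    obtain ⟨y, hdyd, hydy⟩ :
        ∃ y, (b - a) * y * (b - a) = b - a ∧ y * (b - a) * y = y := by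
      refine ⟨y₀ * (b - a) * y₀, ?_, ?_⟩
      · calc (b - a) * (y₀ * (b - a) * y₀) * (b - a)
            = (b - a) * y₀ * ((b - a) * y₀ * (b - a)) := by simp only [mul_assoc]
          _ = b - a := by rw [hdyd0, hdyd0]
      · calc y₀ * (b - a) * y₀ * (b - a) * (y₀ * (b - a) * y₀)
            = y₀ * ((b - a) * y₀ * (b - a)) * (y₀ * (b - a) * y₀) := by
              simp only [mul_assoc]
          _ = y₀ * (b - a) * (y₀ * (b - a) * y₀) := by rw [hdyd0]
          _ = y₀ * ((b - a) * y₀ * (b - a)) * y₀ := by simp only [mul_assoc]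
          _ = y₀ * (b - a) * y₀ := by rw [hdyd0]
    refine ⟨z + (1 - z * b) * y * (1 - b * z), ?_, ?_⟩
    · exact aux_inv z (1 - z * b) y (1 - b * z) (b - a) a b hbxb
        (by rw [mul_sub, mul_one, ← mul_assoc, hbxb])
        (by rw [sub_mul, one_mul, hbxb])
        hdyd (by abel)
    · exact (aux_sub z (1 - z * b) y (1 - b * z) (b - a)
        (by rw [mul_sub, ← hx3, sub_self])
        (by rw [sub_mul, ← hx2, sub_self])
        (by rw [mul_sub, mul_one, ← mul_assoc,
            show (b - a) * z = 0 by rw [sub_mul, ← hx2, sub_self], zero_mul, sub_zero])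
        (by rw [sub_mul, one_mul, mul_assoc,
            show z * (b - a) = 0 by rw [mul_sub, ← hx3, sub_self], mul_zero, sub_zero])
        hydy).symm
  · rintro ⟨c, hcb, rfl⟩
    have hacb : a * c * b = a :=
      calc a * c * b = p * b * c * b := by rw [hpb1]
        _ = p * (b * c * b) := by simp only [mul_assoc]
        _ = p * b := by rw [hcb]
        _ = a := hpb1
    have hbca : b * c * a = a :=
      calc b * c * a = b * c * (b * q) := by rw [hbq1]
        _ = b * c * b * q := by simp only [mul_assoc]
        _ = b * q := by rw [hcb]
        _ = a := hbq1
    have haca : a * c * a = a :=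
      calc a * c * a = a * c * (b * q) := by rw [hbq1]
        _ = a * c * b * q := by simp only [mul_assoc]
        _ = a * q := by rw [hacb]
        _ = a := haq1
    refine ⟨?_, ?_, ?_⟩
    · -- a * z * a = a
      simp only [mul_sub, sub_mul, mul_assoc]
      rw [show a * (c * (b * (c * a))) = (a * c * b) * (c * a) by simp only [mul_assoc],
        show a * (c * (a * (c * a))) = (a * c * a) * (c * a) by simp only [mul_assoc],
        hacb, haca]
      rw [show a * (c * a) = a * c * a by rw [mul_assoc], haca]
      abel
    · -- a * z = b * z
      simp only [mul_sub, sub_mul, mul_assoc]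
      rw [show a * (c * (b * c)) = (a * c * b) * c by simp only [mul_assoc],
        show a * (c * (a * c)) = (a * c * a) * c by simp only [mul_assoc],
        show b * (c * (b * c)) = (b * c * b) * c by simp only [mul_assoc],
        show b * (c * (a * c)) = (b * c * a) * c by simp only [mul_assoc],
        hacb, haca, hcb, hbca]
      abel
    · -- z * a = z * b
      simp only [mul_sub, sub_mul, mul_assoc]
      rw [show c * (b * (c * a)) = c * (b * c * a) by simp only [mul_assoc],
        show c * (a * (c * a)) = c * (a * c * a) by simp only [mul_assoc],
        show c * (b * (c * b)) = c * (b * c * b) by simp only [mul_assoc],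
        show c * (a * (c * b)) = c * (a * c * b) by simp only [mul_assoc],
        hacb, haca, hcb, hbca]
      abel
end

section
/- Let A be a ring and a, b ∈ A regular with a ≤⁻ b. Then: (1) for every a⁻ ∈ G₁ᵇ(a) there exists b⁻ ∈ G₁(b) with b⁻ a = a⁻ a and a b⁻ = a a⁻; (2) for every b⁻ ∈ G₁(b) there exists a⁻ ∈ G₁ᵇ(a) with b⁻ a = a⁻ a and a b⁻ = a a⁻. -/
theorem stmt15 {A : Type*} [Ring A] (a b : A)
    (ha : ∃ x, a * x * a = a) (hb : ∃ y, b * y * b = b)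
    (h : minusLE a b) :
    (∀ am : A, am ∈ G1 a → a * am = b * am → am * a = am * b →
      ∃ bm ∈ G1 b, bm * a = am * a ∧ a * bm = a * am) ∧
    (∀ bm ∈ G1 b, ∃ am : A, am ∈ G1 a ∧ a * am = b * am ∧ am * a = am * b ∧
      bm * a = am * a ∧ a * bm = a * am) := by
  obtain ⟨p, q, hp, hq, hl, hr, hpb, hbq⟩ := h
  -- a = p * b and a = b * q
  have hpa : a = p * a := by
    have h0 : (1 - p) * p = 0 := by rw [sub_mul, one_mul, hp.eq, sub_self]
    have h1 : (1 - p) * a = 0 := (hl _).mpr h0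
    rw [sub_mul, one_mul, sub_eq_zero] at h1
    exact h1
  have hapb : a = p * b := by rw [hpa, hpb]
  have haq : a = a * q := by
    have h0 : q * (1 - q) = 0 := by rw [mul_sub, mul_one, hq.eq, sub_self]
    have h1 : a * (1 - q) = 0 := (hr _).mpr h0
    rw [mul_sub, mul_one, sub_eq_zero] at h1
    exact h1
  have habq : a = b * q := by rw [haq, hbq]
  -- key facts for any inner inverse c of b
  have key : ∀ c : A, b * c * b = b → a * c * a = a ∧ a * c * b = a ∧ b * c * a = a := by
    intro c hc
    have k1 : a * c * b = a := by
      calc a * c * b = p * (b * c * b) := by rw [hapb]; noncomm_ring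
        _ = p * b := by rw [hc]
        _ = a := hapb.symm
    have k2 : b * c * a = a := by
      calc b * c * a = b * c * b * q := by rw [habq]; noncomm_ring
        _ = b * q := by rw [hc]
        _ = a := habq.symm
    have k3 : a * c * a = a := by
      calc a * c * a = a * c * b * q := by rw [habq]; noncomm_ring
        _ = a * q := by rw [k1]
        _ = a := haq.symm
    exact ⟨k3, k1, k2⟩
  obtain ⟨c, hc⟩ := hb
  obtain ⟨kaca, kacb, kbca⟩ := key c hc
  constructor
  · -- part (1)
    intro am hG h1 h2
    have ham : a * am * a = a := hG
    refine ⟨am * a * am + (1 - am * a) * c * (1 - a * am), ?_, ?_, ?_⟩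
    · -- b * bm * b = b
      show b * (am * a * am + (1 - am * a) * c * (1 - a * am)) * b = b
      have hba : b * am * a = a := by rw [← h1, ham]
      have haab : a * am * b = a := by rw [mul_assoc, ← h2, ← mul_assoc, ham]
      have e1 : b * (am * a * am) * b = a := by
        calc b * (am * a * am) * b = (b * am * a) * am * b := by noncomm_ring
          _ = a * am * b := by rw [hba]
          _ = a := haab
      have e2 : b * (1 - am * a) = b - a := by
        rw [mul_sub, mul_one, ← mul_assoc, hba]
      have e3 : (1 - a * am) * b = b - a := by
        rw [sub_mul, one_mul, haab]
      have e4 : b * ((1 - am * a) * c * (1 - a * am)) * b = (b - a) * c * (b - a) := by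
        calc b * ((1 - am * a) * c * (1 - a * am)) * b
            = (b * (1 - am * a)) * c * ((1 - a * am) * b) := by noncomm_ring
          _ = (b - a) * c * (b - a) := by rw [e2, e3]
      have e5 : (b - a) * c * (b - a) = b - a := by
        have : (b - a) * c * (b - a) = b * c * b - b * c * a - (a * c * b - a * c * a) := by
          noncomm_ring
        rw [this, hc, kbca, kacb, kaca, sub_self, sub_zero]
      calc b * (am * a * am + (1 - am * a) * c * (1 - a * am)) * b
          = b * (am * a * am) * b + b * ((1 - am * a) * c * (1 - a * am)) * b := by noncomm_ring
        _ = a + (b - a) := by rw [e1, e4, e5]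
        _ = b := by abel
    · -- bm * a = am * a
      have z1 : (1 - a * am) * a = 0 := by rw [sub_mul, one_mul, ham, sub_self]
      calc (am * a * am + (1 - am * a) * c * (1 - a * am)) * a
          = am * (a * am * a) + (1 - am * a) * c * ((1 - a * am) * a) := by noncomm_ring
        _ = am * a := by rw [ham, z1, mul_zero, add_zero]
    · -- a * bm = a * am
      have z1 : a * (1 - am * a) = 0 := by rw [mul_sub, mul_one, ← mul_assoc, ham, sub_self]
      calc a * (am * a * am + (1 - am * a) * c * (1 - a * am))
          = (a * am * a) * am + (a * (1 - am * a)) * (c * (1 - a * am)) := by noncomm_ring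
        _ = a * am := by rw [ham, z1, zero_mul, add_zero]
  · -- part (2)
    intro bm hbm
    obtain ⟨maca, macb, mbca⟩ := key bm hbm
    refine ⟨bm * a * bm, ?_, ?_, ?_, ?_, ?_⟩
    · show a * (bm * a * bm) * a = a
      calc a * (bm * a * bm) * a = (a * bm * a) * (bm * a) := by noncomm_ring
        _ = a := by rw [maca, ← mul_assoc, maca]
    · calc a * (bm * a * bm) = (a * bm * a) * bm := by noncomm_ring
        _ = a * bm := by rw [maca]
        _ = (b * bm * a) * bm := by rw [mbca]
        _ = b * (bm * a * bm) := by noncomm_ring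
    · calc (bm * a * bm) * a = bm * (a * bm * a) := by noncomm_ring
        _ = bm * a := by rw [maca]
        _ = bm * (a * bm * b) := by rw [macb]
        _ = (bm * a * bm) * b := by noncomm_ring
    · calc bm * a = bm * (a * bm * a) := by rw [maca]
        _ = (bm * a * bm) * a := by noncomm_ring
    · symm
      calc a * (bm * a * bm) = (a * bm * a) * bm := by noncomm_ring
        _ = a * bm := by rw [maca]
end

section
/- Let A be a unital complex algebra, a, b ∈ A regular with a ≤⁻ b, and c₁, c₂ ∈ ℂ with c₂ ≠ 0 and c₁ + c₂ ≠ 0. Then c₁ a + c₂ b is invertible if and only if b is invertible, and in that case (c₁ a + c₂ b)⁻¹ = c₂⁻¹ b⁻¹ + ((c₁ + c₂)⁻¹ - c₂⁻¹) b⁻¹ a b⁻¹. -/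
theorem stmt16 {A : Type*} [Ring A] [Algebra ℂ A] (a b : A)
    (ha : ∃ x, a * x * a = a) (hb : ∃ y, b * y * b = b)
    (h : minusLE a b) (c₁ c₂ : ℂ) (hc₂ : c₂ ≠ 0) (hc : c₁ + c₂ ≠ 0) :
    (IsUnit (c₁ • a + c₂ • b) ↔ IsUnit b) ∧
    (∀ b' : A, b * b' = 1 → b' * b = 1 →
      (c₁ • a + c₂ • b) * (c₂⁻¹ • b' + ((c₁ + c₂)⁻¹ - c₂⁻¹) • (b' * a * b')) = 1 ∧
      (c₂⁻¹ • b' + ((c₁ + c₂)⁻¹ - c₂⁻¹) • (b' * a * b')) * (c₁ • a + c₂ • b) = 1) := by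
  obtain ⟨p, q, hp, hq, h1, h2, h3, h4⟩ := h
  have pa : p * a = a := by
    have h0 : (1 - p) * a = 0 := (h1 (1 - p)).mpr (by simp [sub_mul, hp.eq])
    have h0' : a - p * a = 0 := by simpa [sub_mul] using h0
    exact (sub_eq_zero.mp h0').symm
  have aq : a * q = a := by
    have h0 : a * (1 - q) = 0 := (h2 (1 - q)).mpr (by simp [mul_sub, hq.eq])
    have h0' : a - a * q = 0 := by simpa [mul_sub] using h0
    exact (sub_eq_zero.mp h0').symm
  have hab : a = p * b := by rw [← h3, pa]
  have hab2 : a = b * q := by rw [← h4, aq]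
  have key : ∀ b' : A, b * b' = 1 → b' * b = 1 →
      (c₁ • a + c₂ • b) * (c₂⁻¹ • b' + ((c₁ + c₂)⁻¹ - c₂⁻¹) • (b' * a * b')) = 1 ∧
      (c₂⁻¹ • b' + ((c₁ + c₂)⁻¹ - c₂⁻¹) • (b' * a * b')) * (c₁ • a + c₂ • b) = 1 := by
    intro b' hb1 hb2
    have hb1' : ∀ x : A, b * (b' * x) = x := fun x => by rw [← mul_assoc, hb1, one_mul]
    have hb2' : ∀ x : A, b' * (b * x) = x := fun x => by rw [← mul_assoc, hb2, one_mul]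
    have hp' : ∀ x : A, p * (p * x) = p * x := fun x => by rw [← mul_assoc, hp.eq]
    have hq' : ∀ x : A, q * (q * x) = q * x := fun x => by rw [← mul_assoc, hq.eq]
    constructor
    · rw [hab]
      simp only [mul_add, add_mul, smul_mul_assoc, mul_smul_comm, smul_smul, mul_assoc,
        hb1', hb2', hp', hq', hb1, hb2, hp.eq, hq.eq, mul_one, one_mul]
      match_scalars <;> field_simp <;> ring
    · rw [hab2]
      simp only [mul_add, add_mul, smul_mul_assoc, mul_smul_comm, smul_smul, mul_assoc,
        hb1', hb2', hp', hq', hb1, hb2, hp.eq, hq.eq, mul_one, one_mul]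
      match_scalars <;> field_simp <;> ring
  refine ⟨⟨fun hunit => ?_, fun hbu => ?_⟩, key⟩
  · have huv : (c₁ • p + c₂ • (1 : A)) * (((c₁ + c₂)⁻¹ - c₂⁻¹) • p + c₂⁻¹ • (1 : A)) = 1 := by
      simp only [mul_add, add_mul, smul_mul_assoc, mul_smul_comm, smul_smul, hp.eq,
        mul_one, one_mul]
      match_scalars <;> field_simp <;> ring
    have hvu : (((c₁ + c₂)⁻¹ - c₂⁻¹) • p + c₂⁻¹ • (1 : A)) * (c₁ • p + c₂ • (1 : A)) = 1 := by
      simp only [mul_add, add_mul, smul_mul_assoc, mul_smul_comm, smul_smul, hp.eq,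
        mul_one, one_mul]
      match_scalars <;> field_simp <;> ring
    have hfac : c₁ • a + c₂ • b = (c₁ • p + c₂ • (1 : A)) * b := by
      rw [add_mul, smul_mul_assoc, smul_mul_assoc, ← hab, one_mul]
    have hbeq : b = (((c₁ + c₂)⁻¹ - c₂⁻¹) • p + c₂⁻¹ • (1 : A)) * (c₁ • a + c₂ • b) := by
      rw [hfac, ← mul_assoc, hvu, one_mul]
    rw [hbeq]
    exact (Units.isUnit ⟨_, _, hvu, huv⟩).mul hunit
  · obtain ⟨β, rfl⟩ := hbu
    obtain ⟨h1', h2'⟩ := key ↑β⁻¹ (by simp) (by simp)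
    exact ⟨⟨_, _, h1', h2'⟩, rfl⟩
end

section
/- Let A be a unital ring, a ∈ A regular, and a⁻ an inner inverse of a. Then a ≤⁻ a + (1 - a a⁻) x (1 - a⁻ a) for every x ∈ A. -/
theorem stmt18 {A : Type*} [Ring A] (a c : A) (hc : a * c * a = a) (x : A) :
    minusLE a (a + (1 - a * c) * x * (1 - c * a)) := by
  have hca : a * c * (1 - a * c) = 0 := by
    rw [mul_sub, mul_one, ← mul_assoc, hc, sub_self]
  have hac : (1 - c * a) * (c * a) = 0 := by
    rw [sub_mul, one_mul, mul_assoc, ← mul_assoc a c a, hc, sub_self]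
  refine ⟨a * c, c * a, ?_, ?_, ?_, ?_, ?_, ?_⟩
  · show a * c * (a * c) = a * c
    rw [← mul_assoc, hc]
  · show c * a * (c * a) = c * a
    rw [mul_assoc, ← mul_assoc a c a, hc]
  · intro z
    constructor
    · intro h; rw [← mul_assoc, h, zero_mul]
    · intro h
      calc z * a = z * (a * c * a) := by rw [hc]
        _ = z * (a * c) * a := by simp only [mul_assoc]
        _ = 0 := by rw [h, zero_mul]
  · intro z
    constructor
    · intro h; rw [mul_assoc, h, mul_zero]
    · intro h
      calc a * z = a * c * a * z := by rw [hc]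
        _ = a * (c * (a * z)) := by simp only [mul_assoc]
        _ = 0 := by rw [mul_assoc] at h; rw [h, mul_zero]
  · rw [mul_add, hc, ← mul_assoc, ← mul_assoc, hca, zero_mul, zero_mul, add_zero]
  · rw [add_mul, mul_assoc _ (1 - c * a) (c * a), hac, mul_zero, add_zero,
      ← mul_assoc, hc]
end
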